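/- arXiv:2405.10228 — 4 statements merged into one kernel-verified Lean document; each statement's English description precedes it below -/
import Mathlib

section
/- Let m ≥ 0, V > 0, and k = (k₁, k₂, k₃) ∈ ℝ³ with ω = √(k₁² + k₂² + k₃² + m²) satisfying ω + m > 0. For α = 1, 2 define the 4-component spinors u^α(k) ∈ ℂ⁴ with upper 2-component block √((ω+m)/(2ωV)) φ^α and lower 2-component block ((σ·k)/√(2ω(ω+m)V)) φ^α, where φ¹ = (1,0)ᵀ, φ² = (0,1)ᵀ, and σ·k = k₁σ₁ + k₂σ₂ + k₃σ₃. Let A = (1/2)(I₄ − L) with L the 4×4 exchange matrix. Then Σ_{α=1,2} u^α(k)† A u^α(k) = (1/V)(1 − k₁/ω). -/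
open Matrix

theorem stmt6 (m V k1 k2 k3 ω a b : ℝ) (hm : 0 ≤ m) (hV : 0 < V)
    (hω : ω = Real.sqrt (k1 ^ 2 + k2 ^ 2 + k3 ^ 2 + m ^ 2)) (hωm : 0 < ω + m)
    (ha : a = Real.sqrt ((ω + m) / (2 * ω * V)))
    (hb : b = 1 / Real.sqrt (2 * ω * (ω + m) * V))
    (u : Fin 2 → Fin 4 → ℂ)
    (hu1 : u 0 = ![(a : ℂ), 0, (b : ℂ) * (k3 : ℂ), (b : ℂ) * ((k1 : ℂ) + Complex.I * (k2 : ℂ))])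
    (hu2 : u 1 = ![0, (a : ℂ), (b : ℂ) * ((k1 : ℂ) - Complex.I * (k2 : ℂ)), -((b : ℂ) * (k3 : ℂ))])
    (A : Matrix (Fin 4) (Fin 4) ℂ)
    (hA : A = (1 / 2 : ℂ) • ((1 : Matrix (Fin 4) (Fin 4) ℂ) -
      !![0, 0, 0, 1; 0, 0, 1, 0; 0, 1, 0, 0; 1, 0, 0, 0])) :
    ∑ α : Fin 2, dotProduct (star (u α)) (A.mulVec (u α))
      = (((1 / V) * (1 - k1 / ω) : ℝ) : ℂ) := by
  have hωnn : 0 ≤ k1 ^ 2 + k2 ^ 2 + k3 ^ 2 + m ^ 2 := by positivity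
  have hωsq : ω ^ 2 = k1 ^ 2 + k2 ^ 2 + k3 ^ 2 + m ^ 2 := by
    rw [hω, Real.sq_sqrt hωnn]
  have hωm' : m ≤ ω := by
    rw [hω]
    calc m = Real.sqrt (m ^ 2) := by rw [Real.sqrt_sq hm]
    _ ≤ _ := Real.sqrt_le_sqrt (by nlinarith)
  have hω0 : 0 < ω := by linarith
  have ha2 : a ^ 2 = (ω + m) / (2 * ω * V) := by
    rw [ha, Real.sq_sqrt (by positivity)]
  have hb2 : b ^ 2 = 1 / (2 * ω * (ω + m) * V) := by
    rw [hb, div_pow, one_pow, Real.sq_sqrt (by positivity)]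
  have hab : a * b = 1 / (2 * ω * V) := by
    rw [ha, hb, one_div, ← Real.sqrt_inv, ← Real.sqrt_mul (by positivity)]
    rw [show (ω + m) / (2 * ω * V) * (2 * ω * (ω + m) * V)⁻¹
        = (1 / (2 * ω * V)) ^ 2 by field_simp]
    exact Real.sqrt_sq (by positivity)
  have key : ∑ α : Fin 2, dotProduct (star (u α)) (A.mulVec (u α))
      = ((a ^ 2 + b ^ 2 * (k1 ^ 2 + k2 ^ 2 + k3 ^ 2) - 2 * (a * b) * k1 : ℝ) : ℂ) := by
    subst hA
    simp only [Fin.sum_univ_two, hu1, hu2, dotProduct, Matrix.mulVec,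
      Fin.sum_univ_four, Matrix.smul_apply, Matrix.sub_apply, Matrix.one_apply,
      Matrix.cons_val', Matrix.cons_val_zero, Matrix.cons_val_one, Matrix.head_cons,
      Matrix.cons_val_fin_one, Matrix.empty_val', Matrix.cons_val_succ,
      Matrix.head_fin_const, Pi.star_apply, Matrix.of_apply,
      Matrix.cons_val_two, Matrix.cons_val_three, Matrix.head_fin_const,
      Matrix.tail_cons, star_mul', star_sub, star_add, RCLike.star_def,
      Complex.conj_ofReal, Complex.conj_I, if_true, if_false]
    norm_num
    push_cast
    ring_nf
    simp [Complex.ext_iff]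
  rw [key]
  norm_cast
  rw [ha2, hb2, hab]
  have h1 : k1 ^ 2 + k2 ^ 2 + k3 ^ 2 = ω ^ 2 - m ^ 2 := by linarith
  rw [h1]
  field_simp
  ring
end

section
/- Let m ≥ 0 and let G₊, G₋ : ℝ → [0, ∞] be measurable. Then ∫_0^∞ ∫_0^∞ ∫∫_{D} μ₊ k₊ G₊(k₊ + μ₊) G₋(k₋ + μ₋) dk₊ dk₋ dμ₋ dμ₊ = ∫_0^∞ ∫_{m²/u}^∞ P_m(u,v) G₊(u) G₋(v) dv du, where D = {(k₊, k₋) : k₊ > 0, k₋ > 0, k₊ k₋ ≥ m²} and P_m(u,v) = v u³/6 − m² u²/2 + m⁴ u/(2v) − m⁶/(6 v²). In particular both sides may be infinite, and equality is in [0, ∞]. -/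
open MeasureTheory Set

lemma shift0 (F : ℝ → ENNReal) (a : ℝ) :
    ∫⁻ x in Ioi (0:ℝ), F (a + x) = ∫⁻ u in Ioi a, F u := by
  have h : MeasurePreserving (fun x : ℝ => a + x) volume volume :=
    measurePreserving_add_left volume a
  have he : MeasurableEmbedding (fun x : ℝ => a + x) :=
    (MeasurableEquiv.addLeft a).measurableEmbedding
  have := h.setLIntegral_comp_preimage_emb he F (Ioi a)
  rw [← this]
  congr 1
  ext x
  simp

lemma swapRegion (H : ℝ → ℝ → ENNReal) (hH : Measurable (Function.uncurry H)) :
    ∫⁻ x in Ioi (0:ℝ), ∫⁻ y in Ioi x, H x y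
      = ∫⁻ y in Ioi (0:ℝ), ∫⁻ x in Ioo 0 y, H x y := by
  have h1 : ∀ x : ℝ, x ∈ Ioi (0:ℝ) → (∫⁻ y in Ioi x, H x y)
      = ∫⁻ y in Ioi (0:ℝ), (Ioi x).indicator (H x) y := by
    intro x hx
    rw [lintegral_indicator measurableSet_Ioi, Measure.restrict_restrict measurableSet_Ioi]
    congr 1
    rw [Set.Ioi_inter_Ioi]
    congr 1
    simp [(show (0:ℝ) < x from hx).le]
  rw [setLIntegral_congr_fun measurableSet_Ioi (fun x hx => h1 x hx)]
  rw [lintegral_lintegral_swap]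
  · apply setLIntegral_congr_fun measurableSet_Ioi
    intro y hy
    beta_reduce
    have h2 : ∀ x : ℝ, x ∈ Ioi (0:ℝ) → (Ioi x).indicator (H x) y
        = (Ioo 0 y).indicator (fun x => H x y) x := by
      intro x hx
      by_cases h : x < y
      · rw [indicator_of_mem (by exact h), indicator_of_mem (Set.mem_Ioo.mpr ⟨hx, h⟩)]
      · rw [indicator_of_notMem (by simpa using h), indicator_of_notMem (by simp [h])]
    rw [setLIntegral_congr_fun measurableSet_Ioi (fun x hx => h2 x hx),
      lintegral_indicator measurableSet_Ioo, Measure.restrict_restrict measurableSet_Ioo,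
      Set.Ioo_inter_Ioi]
    norm_num
  · apply Measurable.aemeasurable
    have : (Function.uncurry fun (x y : ℝ) => (Ioi x).indicator (H x) y)
        = {p : ℝ × ℝ | p.1 < p.2}.indicator (Function.uncurry H) := by
      ext p
      by_cases h : p.1 < p.2
      · simp [Function.uncurry, indicator_of_mem, h]
      · simp [Function.uncurry, indicator_of_notMem, h]
    rw [this]
    exact hH.indicator (measurableSet_lt measurable_fst measurable_snd)

lemma scalar11 (m u v : ℝ) (hu : 0 < u) (hv : 0 < v) :
    ∫⁻ k in Ioo (0:ℝ) u, ENNReal.ofReal ((u - k) * k) * ENNReal.ofReal (v - m ^ 2 / k)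
      = if m ^ 2 ≤ u * v then
          ENNReal.ofReal (v * u ^ 3 / 6 - m ^ 2 * u ^ 2 / 2 + m ^ 4 * u / (2 * v)
            - m ^ 6 / (6 * v ^ 2)) else 0 := by
  set c : ℝ := m ^ 2 / v with hc
  have hc0 : 0 ≤ c := div_nonneg (sq_nonneg m) hv.le
  by_cases h : m ^ 2 ≤ u * v
  · rw [if_pos h]
    have hcu : c ≤ u := (div_le_iff₀ hv).mpr (by linarith [h])
    -- rewrite integrand as indicator
    have key : ∀ k : ℝ, k ∈ Ioo (0:ℝ) u →
        ENNReal.ofReal ((u - k) * k) * ENNReal.ofReal (v - m ^ 2 / k)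
          = (Ioi c).indicator (fun k => ENNReal.ofReal ((u - k) * (k * v - m ^ 2))) k := by
      intro k hk
      obtain ⟨hk0, hku⟩ := hk
      by_cases hkc : c < k
      · rw [indicator_of_mem (by exact hkc)]
        have h1 : m ^ 2 / k ≤ v := by
          rw [div_le_iff₀ hk0]
          have := (div_lt_iff₀ hv).mp hkc
          linarith
        rw [← ENNReal.ofReal_mul (by nlinarith)]
        congr 1
        field_simp
      · rw [indicator_of_notMem (by simpa using hkc)]
        push_neg at hkc
        have h1 : v ≤ m ^ 2 / k := by
          rw [le_div_iff₀ hk0]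
          have := (le_div_iff₀ hv).mp hkc
          linarith
        have hz : ENNReal.ofReal (v - m ^ 2 / k) = 0 := ENNReal.ofReal_eq_zero.mpr (by linarith)
        rw [hz, mul_zero]
    rw [setLIntegral_congr_fun measurableSet_Ioo (fun x hx => key x hx),
      lintegral_indicator measurableSet_Ioi, Measure.restrict_restrict measurableSet_Ioi,
      show Ioi c ∩ Ioo 0 u = Ioo c u by
        ext x; simp only [mem_inter_iff, mem_Ioi, mem_Ioo]
        constructor
        · rintro ⟨h1, h2, h3⟩; exact ⟨h1, h3⟩
        · rintro ⟨h1, h2⟩; exact ⟨h1, lt_of_le_of_lt hc0 h1, h2⟩]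
    have hint : IntegrableOn (fun k => (u - k) * (k * v - m ^ 2)) (Ioo c u) := by
      rw [← integrableOn_Icc_iff_integrableOn_Ioo]
      exact (Continuous.continuousOn (by continuity)).integrableOn_compact isCompact_Icc
    have hnn : 0 ≤ᵐ[volume.restrict (Ioo c u)] fun k => (u - k) * (k * v - m ^ 2) := by
      filter_upwards [ae_restrict_mem measurableSet_Ioo] with k hk
      obtain ⟨h1, h2⟩ := hk
      have : m ^ 2 < k * v := by
        have := (div_lt_iff₀ hv).mp h1; linarith
      simp only [Pi.zero_apply]
      nlinarith
    rw [← MeasureTheory.ofReal_integral_eq_lintegral_ofReal hint hnn]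
    congr 1
    have heq : ∫ k in Ioo c u, (u - k) * (k * v - m ^ 2)
        = ∫ k in c..u, (u - k) * (k * v - m ^ 2) := by
      rw [intervalIntegral.integral_of_le hcu, MeasureTheory.integral_Ioc_eq_integral_Ioo]
    rw [heq]
    have hderiv : ∀ k : ℝ, HasDerivAt
        (fun k => u * v / 2 * k ^ 2 - u * m ^ 2 * k - v / 3 * k ^ 3 + m ^ 2 / 2 * k ^ 2)
        ((u - k) * (k * v - m ^ 2)) k := by
      intro k
      have h2 := hasDerivAt_pow 2 k
      have h3 := hasDerivAt_pow 3 k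
      have hid := hasDerivAt_id k
      refine ((((h2.const_mul (u * v / 2)).sub ((hid.const_mul (u * m ^ 2)))).sub
        (h3.const_mul (v / 3))).add (h2.const_mul (m ^ 2 / 2))).congr_deriv ?_
      push_cast
      ring
    rw [intervalIntegral.integral_eq_sub_of_hasDerivAt (fun k _ => hderiv k)
      (by apply Continuous.intervalIntegrable; continuity)]
    rw [hc]
    field_simp
    ring
  · rw [if_neg h]
    push_neg at h
    have hm0 : 0 < m ^ 2 := lt_of_le_of_lt (by positivity) h
    have key : ∀ k : ℝ, k ∈ Ioo (0:ℝ) u →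
        ENNReal.ofReal ((u - k) * k) * ENNReal.ofReal (v - m ^ 2 / k) = 0 := by
      rintro k ⟨hk0, hku⟩
      have h1 : v < m ^ 2 / k := by
        rw [lt_div_iff₀ hk0]
        nlinarith
      have hz : ENNReal.ofReal (v - m ^ 2 / k) = 0 := ENNReal.ofReal_eq_zero.mpr (by linarith)
      rw [hz, mul_zero]
    rw [setLIntegral_congr_fun measurableSet_Ioo (fun x hx => key x hx),
      lintegral_zero]

set_option maxHeartbeats 1000000 in
theorem stmt11 (m : ℝ) (hm : 0 ≤ m) (Gp Gm : ℝ → ENNReal)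
    (hGp : Measurable Gp) (hGm : Measurable Gm) :
    (∫⁻ μp in Ioi (0 : ℝ), ∫⁻ μm in Ioi (0 : ℝ),
      ∫⁻ p : ℝ × ℝ in {p : ℝ × ℝ | 0 < p.1 ∧ 0 < p.2 ∧ m ^ 2 ≤ p.1 * p.2},
        ENNReal.ofReal (μp * p.1) * Gp (p.1 + μp) * Gm (p.2 + μm))
      = ∫⁻ u in Ioi (0 : ℝ), ∫⁻ v in Ici (m ^ 2 / u),
          ENNReal.ofReal (v * u ^ 3 / 6 - m ^ 2 * u ^ 2 / 2 + m ^ 4 * u / (2 * v)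
            - m ^ 6 / (6 * v ^ 2)) * Gp u * Gm v := by
  -- abbreviations
  set E : ℝ → ℝ → ENNReal := fun k l => if m ^ 2 ≤ k * l then 1 else 0 with hEdef
  have hE : Measurable (Function.uncurry E) := by
    apply Measurable.ite (measurableSet_le measurable_const (measurable_fst.mul measurable_snd))
      measurable_const measurable_const
  have hEk : ∀ k, Measurable (E k) := fun k =>
    Measurable.ite (measurableSet_le measurable_const (measurable_const.mul measurable_id))
      measurable_const measurable_const
  have hdiv : Measurable (fun k : ℝ => m ^ 2 / k) := measurable_const.div measurable_id
  set W : ℝ → ENNReal := fun k => ∫⁻ v in Ioi (0:ℝ), ENNReal.ofReal (v - m ^ 2 / k) * Gm v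
    with hWdef
  have hWm : Measurable W := by
    apply Measurable.lintegral_prod_right
    exact ((measurable_snd.sub (hdiv.comp measurable_fst)).ennreal_ofReal).mul
      (hGm.comp measurable_snd)
  have hSm : MeasurableSet {p : ℝ × ℝ | m ^ 2 ≤ p.1 * p.2} :=
    measurableSet_le measurable_const (measurable_fst.mul measurable_snd)
  have hstep1 : ∀ μp μm : ℝ,
      (∫⁻ p : ℝ × ℝ in {p : ℝ × ℝ | 0 < p.1 ∧ 0 < p.2 ∧ m ^ 2 ≤ p.1 * p.2},
        ENNReal.ofReal (μp * p.1) * Gp (p.1 + μp) * Gm (p.2 + μm))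
      = ∫⁻ k in Ioi (0:ℝ), ∫⁻ l in Ioi (0:ℝ),
          E k l * (ENNReal.ofReal (μp * k) * Gp (k + μp)) * Gm (l + μm) := by
    intro μp μm
    have hf : Measurable (fun p : ℝ × ℝ =>
        ENNReal.ofReal (μp * p.1) * Gp (p.1 + μp) * Gm (p.2 + μm)) := by
      apply Measurable.mul
      · apply Measurable.mul
        · exact (measurable_const.mul measurable_fst).ennreal_ofReal
        · exact hGp.comp (measurable_fst.add measurable_const)
      · exact hGm.comp (measurable_snd.add measurable_const)
    have hD : {p : ℝ × ℝ | 0 < p.1 ∧ 0 < p.2 ∧ m ^ 2 ≤ p.1 * p.2}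
        = {p : ℝ × ℝ | m ^ 2 ≤ p.1 * p.2} ∩ (Ioi (0:ℝ) ×ˢ Ioi (0:ℝ)) := by
      ext p
      simp only [mem_setOf_eq, mem_inter_iff, mem_prod, mem_Ioi]
      tauto
    rw [hD, ← Measure.restrict_restrict hSm, ← lintegral_indicator hSm,
      Measure.volume_eq_prod, ← Measure.prod_restrict,
      lintegral_prod _ (hf.indicator hSm).aemeasurable]
    apply lintegral_congr
    intro k
    apply lintegral_congr
    intro l
    by_cases h : m ^ 2 ≤ k * l
    · rw [indicator_of_mem (by exact h)]
      simp only [hEdef]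
      rw [if_pos h, one_mul]
    · rw [indicator_of_notMem (by exact h)]
      simp only [hEdef]
      rw [if_neg h, zero_mul, zero_mul]
  have hA : ∀ k : ℝ, 0 < k → ∀ v : ℝ, 0 < v →
      (∫⁻ l in Ioo (0:ℝ) v, E k l) = ENNReal.ofReal (v - m ^ 2 / k) := by
    intro k hk v hv
    have hc0 : 0 ≤ m ^ 2 / k := div_nonneg (sq_nonneg m) hk.le
    have h1 : ∀ l : ℝ, E k l = (Ici (m ^ 2 / k)).indicator 1 l := by
      intro l
      simp only [hEdef]
      by_cases h : m ^ 2 / k ≤ l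
      · rw [if_pos (by rw [div_le_iff₀ hk] at h; linarith), indicator_of_mem (by exact h)]
        rfl
      · rw [if_neg (by rw [div_le_iff₀ hk] at h; intro hc; exact h (by linarith)),
          indicator_of_notMem (by exact h)]
    simp only [h1]
    rw [lintegral_indicator_one measurableSet_Ici, Measure.restrict_apply measurableSet_Ici]
    rcases eq_or_lt_of_le hc0 with hc | hc
    · rw [show Ici (m ^ 2 / k) ∩ Ioo 0 v = Ioo 0 v by
        rw [← hc]
        apply inter_eq_self_of_subset_right
        intro x hx
        exact le_of_lt hx.1]
      rw [Real.volume_Ioo, ← hc, sub_zero]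
    · rw [show Ici (m ^ 2 / k) ∩ Ioo 0 v = Ico (m ^ 2 / k) v by
        ext x
        simp only [mem_inter_iff, mem_Ici, mem_Ioo, mem_Ico]
        constructor
        · rintro ⟨h1, h2, h3⟩; exact ⟨h1, h3⟩
        · rintro ⟨h1, h2⟩; exact ⟨h1, lt_of_lt_of_le hc h1, h2⟩]
      rw [Real.volume_Ico]
  have hstep2 : ∀ μp : ℝ,
      (∫⁻ μm in Ioi (0:ℝ), ∫⁻ k in Ioi (0:ℝ), ∫⁻ l in Ioi (0:ℝ),
          E k l * (ENNReal.ofReal (μp * k) * Gp (k + μp)) * Gm (l + μm))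
      = ∫⁻ k in Ioi (0:ℝ), ENNReal.ofReal (μp * k) * Gp (k + μp) * W k := by
    intro μp
    set X : ℝ → ENNReal := fun k => ENNReal.ofReal (μp * k) * Gp (k + μp) with hX
    have hXm : Measurable X := ((measurable_const.mul measurable_id).ennreal_ofReal).mul
      (hGp.comp (measurable_id.add measurable_const))
    have hswapa : AEMeasurable (Function.uncurry fun (μm k : ℝ) =>
        ∫⁻ l in Ioi (0:ℝ), E k l * X k * Gm (l + μm))
        ((volume.restrict (Ioi (0:ℝ))).prod (volume.restrict (Ioi (0:ℝ)))) := by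
      apply Measurable.aemeasurable
      apply Measurable.lintegral_prod_right'
        (f := fun (q : (ℝ × ℝ) × ℝ) => E q.1.2 q.2 * X q.1.2 * Gm (q.2 + q.1.1))
      exact ((hE.comp ((measurable_fst.snd).prodMk measurable_snd)).mul
        (hXm.comp measurable_fst.snd)).mul
        (hGm.comp (measurable_snd.add measurable_fst.fst))
    rw [lintegral_lintegral_swap hswapa]
    apply setLIntegral_congr_fun measurableSet_Ioi
    intro k hk
    beta_reduce
    have hswapb : AEMeasurable (Function.uncurry fun (μm l : ℝ) =>
        E k l * X k * Gm (l + μm))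
        ((volume.restrict (Ioi (0:ℝ))).prod (volume.restrict (Ioi (0:ℝ)))) := by
      apply Measurable.aemeasurable
      exact (((hEk k).comp measurable_snd).mul measurable_const).mul
        (hGm.comp (measurable_snd.add measurable_fst))
    rw [lintegral_lintegral_swap hswapb]
    have hT : Antitone (fun l : ℝ => ∫⁻ v in Ioi l, Gm v) := by
      intro a b hab
      exact lintegral_mono_set (Ioi_subset_Ioi hab)
    have inner1 : ∀ l : ℝ, (∫⁻ μm in Ioi (0:ℝ), E k l * X k * Gm (l + μm))
        = E k l * X k * ∫⁻ v in Ioi l, Gm v := by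
      intro l
      rw [lintegral_const_mul (E k l * X k) (f := fun μm => Gm (l + μm)) (hGm.comp (measurable_const.add measurable_id)), shift0 Gm l]
    simp only [inner1]
    have inner2 : ∀ l : ℝ, E k l * X k * (∫⁻ v in Ioi l, Gm v)
        = X k * (E k l * ∫⁻ v in Ioi l, Gm v) := by
      intro l; ring
    simp only [inner2]
    rw [lintegral_const_mul _ (f := fun l => E k l * ∫⁻ v in Ioi l, Gm v) ((hEk k).mul hT.measurable)]
    congr 1
    have inner3 : ∀ l : ℝ, E k l * (∫⁻ v in Ioi l, Gm v)
        = ∫⁻ v in Ioi l, E k l * Gm v := by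
      intro l
      rw [lintegral_const_mul _ hGm]
    simp only [inner3]
    rw [swapRegion (fun l v => E k l * Gm v)
      (((hEk k).comp measurable_fst).mul (hGm.comp measurable_snd))]
    apply setLIntegral_congr_fun measurableSet_Ioi
    intro v hv
    beta_reduce
    rw [lintegral_mul_const _ (hEk k), hA k hk v hv]
  -- main chain
  simp only [hstep1, hstep2]
  have hswapc : AEMeasurable (Function.uncurry fun (μp k : ℝ) =>
      ENNReal.ofReal (μp * k) * Gp (k + μp) * W k)
      ((volume.restrict (Ioi (0:ℝ))).prod (volume.restrict (Ioi (0:ℝ)))) := by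
    apply Measurable.aemeasurable
    exact (((measurable_fst.mul measurable_snd).ennreal_ofReal).mul
      (hGp.comp (measurable_snd.add measurable_fst))).mul (hWm.comp measurable_snd)
  rw [lintegral_lintegral_swap hswapc]
  have hshift : ∀ k : ℝ, k ∈ Ioi (0:ℝ) →
      (∫⁻ μp in Ioi (0:ℝ), ENNReal.ofReal (μp * k) * Gp (k + μp) * W k)
      = ∫⁻ u in Ioi k, ENNReal.ofReal ((u - k) * k) * Gp u * W k := by
    intro k _
    have h1 : ∀ μp : ℝ, μp ∈ Ioi (0:ℝ) →
        ENNReal.ofReal (μp * k) * Gp (k + μp) * W k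
        = (fun u => ENNReal.ofReal ((u - k) * k) * Gp u * W k) (k + μp) := by
      intro μp _
      simp only [add_sub_cancel_left]
    rw [setLIntegral_congr_fun measurableSet_Ioi (fun x hx => h1 x hx),
      shift0 (fun u => ENNReal.ofReal ((u - k) * k) * Gp u * W k) k]
  rw [setLIntegral_congr_fun measurableSet_Ioi (fun x hx => hshift x hx)]
  rw [swapRegion (fun k u => ENNReal.ofReal ((u - k) * k) * Gp u * W k)
    ((((measurable_snd.sub measurable_fst).mul measurable_fst).ennreal_ofReal).mul
      (hGp.comp measurable_snd) |>.mul (hWm.comp measurable_fst))]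
  apply setLIntegral_congr_fun measurableSet_Ioi
  intro u hu
  beta_reduce
  have hu' : (0:ℝ) < u := hu
  have hc0 : (0:ℝ) ≤ m ^ 2 / u := div_nonneg (sq_nonneg m) hu'.le
  have r1 : ∀ k : ℝ, ENNReal.ofReal ((u - k) * k) * Gp u * W k
      = Gp u * (ENNReal.ofReal ((u - k) * k) * W k) := by intro k; ring
  simp only [r1]
  rw [lintegral_const_mul (Gp u) (f := fun k => ENNReal.ofReal ((u - k) * k) * W k)
    ((((measurable_const.sub measurable_id).mul measurable_id).ennreal_ofReal).mul hWm)]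
  have r2 : ∀ k : ℝ, ENNReal.ofReal ((u - k) * k) * W k
      = ∫⁻ v in Ioi (0:ℝ), ENNReal.ofReal ((u - k) * k)
          * (ENNReal.ofReal (v - m ^ 2 / k) * Gm v) := by
    intro k
    rw [lintegral_const_mul (ENNReal.ofReal ((u - k) * k))
      (f := fun v => ENNReal.ofReal (v - m ^ 2 / k) * Gm v)
      (((measurable_id.sub measurable_const).ennreal_ofReal).mul hGm)]
  simp only [r2]
  have hswapd : AEMeasurable (Function.uncurry fun (k v : ℝ) =>
      ENNReal.ofReal ((u - k) * k) * (ENNReal.ofReal (v - m ^ 2 / k) * Gm v))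
      ((volume.restrict (Ioo (0:ℝ) u)).prod (volume.restrict (Ioi (0:ℝ)))) := by
    apply Measurable.aemeasurable
    exact (((measurable_const.sub measurable_fst).mul measurable_fst).ennreal_ofReal).mul
      (((measurable_snd.sub (hdiv.comp measurable_fst)).ennreal_ofReal).mul
        (hGm.comp measurable_snd))
  rw [lintegral_lintegral_swap hswapd]
  have r3 : ∀ v : ℝ, v ∈ Ioi (0:ℝ) →
      (∫⁻ k in Ioo (0:ℝ) u, ENNReal.ofReal ((u - k) * k)
          * (ENNReal.ofReal (v - m ^ 2 / k) * Gm v))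
      = (if m ^ 2 ≤ u * v then
          ENNReal.ofReal (v * u ^ 3 / 6 - m ^ 2 * u ^ 2 / 2 + m ^ 4 * u / (2 * v)
            - m ^ 6 / (6 * v ^ 2)) else 0) * Gm v := by
    intro v hv
    have r4 : ∀ k : ℝ, ENNReal.ofReal ((u - k) * k)
        * (ENNReal.ofReal (v - m ^ 2 / k) * Gm v)
        = ENNReal.ofReal ((u - k) * k) * ENNReal.ofReal (v - m ^ 2 / k) * Gm v := by
      intro k; ring
    simp only [r4]
    rw [lintegral_mul_const (Gm v)
      (f := fun k => ENNReal.ofReal ((u - k) * k) * ENNReal.ofReal (v - m ^ 2 / k))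
      (((measurable_const.sub measurable_id).mul
        measurable_id).ennreal_ofReal.mul ((measurable_const.sub hdiv).ennreal_ofReal)),
      scalar11 m u v hu' hv]
  rw [setLIntegral_congr_fun measurableSet_Ioi (fun x hx => r3 x hx)]
  -- change of domain from Ioi 0 to Ici (m^2/u)
  have key : (∫⁻ v in Ioi (0:ℝ), (if m ^ 2 ≤ u * v then
        ENNReal.ofReal (v * u ^ 3 / 6 - m ^ 2 * u ^ 2 / 2 + m ^ 4 * u / (2 * v)
          - m ^ 6 / (6 * v ^ 2)) else 0) * Gm v)
      = ∫⁻ v in Ici (m ^ 2 / u),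
          ENNReal.ofReal (v * u ^ 3 / 6 - m ^ 2 * u ^ 2 / 2 + m ^ 4 * u / (2 * v)
            - m ^ 6 / (6 * v ^ 2)) * Gm v := by
    rw [← lintegral_indicator measurableSet_Ioi, ← lintegral_indicator measurableSet_Ici]
    apply lintegral_congr_ae
    have hnull : volume ({0, m ^ 2 / u} : Set ℝ) = 0 :=
      Set.Countable.measure_zero (Set.to_countable _) _
    filter_upwards [measure_eq_zero_iff_ae_notMem.mp hnull] with v hv
    simp only [mem_insert_iff, mem_singleton_iff, not_or] at hv
    obtain ⟨hv0, hvc⟩ := hv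
    by_cases h1 : v ∈ Ioi (0:ℝ)
    · rw [indicator_of_mem h1]
      by_cases h2 : m ^ 2 ≤ u * v
      · rw [if_pos h2, indicator_of_mem]
        exact (div_le_iff₀ hu').mpr (by nlinarith)
      · push_neg at h2
        rw [if_neg (not_le.mpr h2), zero_mul, indicator_of_notMem (by
          simp only [mem_Ici, not_le]
          exact (lt_div_iff₀ hu').mpr (by nlinarith))]
    · rw [indicator_of_notMem h1, indicator_of_notMem]
      intro hmem
      simp only [mem_Ioi, not_lt] at h1
      exact hv0 (le_antisymm h1 (hc0.trans hmem))
  have hmeasP : Measurable (fun v : ℝ =>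
      ENNReal.ofReal (v * u ^ 3 / 6 - m ^ 2 * u ^ 2 / 2 + m ^ 4 * u / (2 * v)
        - m ^ 6 / (6 * v ^ 2)) * Gm v) := by
    apply Measurable.mul _ hGm
    apply Measurable.ennreal_ofReal
    apply Measurable.sub
    · apply Measurable.add
      · exact ((measurable_id.mul measurable_const).div measurable_const).sub measurable_const
      · exact measurable_const.div (measurable_const.mul measurable_id)
    · exact measurable_const.div (measurable_const.mul (measurable_id.pow measurable_const))
  rw [key, ← lintegral_const_mul (Gp u)
    (f := fun v => ENNReal.ofReal (v * u ^ 3 / 6 - m ^ 2 * u ^ 2 / 2 + m ^ 4 * u / (2 * v)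
        - m ^ 6 / (6 * v ^ 2)) * Gm v) hmeasP]
  apply lintegral_congr
  intro v
  ring
end

section
/- Let m > 0 and let h : ℝ → [0, ∞) be measurable with ∫_0^∞ μ (∫_0^∞ h(t + μ) dt) dμ > 0. Then ∫_0^∞ μ (∫_{ℝ³} h((1/2)(√(|k|² + m²) − k₁) + μ) · (1 − k₁/√(|k|² + m²)) d³k) dμ = +∞, where k = (k₁, k₂, k₃) and |k|² = k₁² + k₂² + k₃². (This shows that the lower bound for the null energy smeared along a single null direction is divergent, i.e. trivial.) -/
open MeasureTheory Set
open ENNReal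

lemma sqrt_gt (b x : ℝ) (hb : 0 < b) : x < Real.sqrt (x ^ 2 + b) := by
  have h1 : x ≤ |x| := le_abs_self x
  have h2 : |x| < Real.sqrt (x ^ 2 + b) := by
    rw [← Real.sqrt_sq_eq_abs]
    exact Real.sqrt_lt_sqrt (sq_nonneg x) (by linarith)
  linarith

lemma key_deriv (b : ℝ) (hb : 0 < b) (x : ℝ) :
    HasDerivAt (fun x : ℝ => (1 / 2) * (Real.sqrt (x ^ 2 + b) - x))
      ((1 / 2) * (x / Real.sqrt (x ^ 2 + b) - 1)) x := by
  have hpos : 0 < x ^ 2 + b := by positivity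
  have hs : 0 < Real.sqrt (x ^ 2 + b) := Real.sqrt_pos.2 hpos
  have h1 : HasDerivAt (fun x : ℝ => x ^ 2 + b) (2 * x) x := by
    simpa using (hasDerivAt_pow 2 x).add_const b
  have h2 : HasDerivAt (fun x : ℝ => Real.sqrt (x ^ 2 + b))
      (1 / (2 * Real.sqrt (x ^ 2 + b)) * (2 * x)) x :=
    (Real.hasDerivAt_sqrt hpos.ne').comp x h1
  have h3 := ((h2.sub (hasDerivAt_id x)).const_mul (1 / 2 : ℝ))
  refine h3.congr_deriv ?_
  field_simp

lemma key_cov (b : ℝ) (hb : 0 < b) (g : ℝ → ℝ≥0∞) :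
    ∫⁻ y in Ioi (0 : ℝ), g y =
      ∫⁻ x : ℝ, ENNReal.ofReal ((1 / 2) * (1 - x / Real.sqrt (x ^ 2 + b))) *
        g ((1 / 2) * (Real.sqrt (x ^ 2 + b) - x)) := by
  set f : ℝ → ℝ := fun x => (1 / 2) * (Real.sqrt (x ^ 2 + b) - x) with hf
  set f' : ℝ → ℝ := fun x => (1 / 2) * (x / Real.sqrt (x ^ 2 + b) - 1) with hf'
  have hs : ∀ x : ℝ, 0 < Real.sqrt (x ^ 2 + b) := fun x => Real.sqrt_pos.2 (by positivity)
  have hlt : ∀ x : ℝ, x < Real.sqrt (x ^ 2 + b) := fun x => sqrt_gt b x hb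
  have hneg : ∀ x : ℝ, f' x < 0 := by
    intro x
    have : x / Real.sqrt (x ^ 2 + b) < 1 := (div_lt_one (hs x)).2 (hlt x)
    simp only [hf']
    nlinarith
  have hder : ∀ x : ℝ, HasDerivAt f (f' x) x := fun x => key_deriv b hb x
  have hanti : StrictAnti f := strictAnti_of_deriv_neg fun x => by
    rw [(hder x).deriv]; exact hneg x
  have hinj : InjOn f univ := hanti.injective.injOn
  have hrange : f '' univ = Ioi 0 := by
    rw [image_univ]
    apply Subset.antisymm
    · rintro _ ⟨x, rfl⟩
      simp only [hf, mem_Ioi]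
      have := hlt x
      nlinarith
    · intro y hy
      have hy0 : (0 : ℝ) < y := hy
      have hyne : y ≠ 0 := hy0.ne'
      refine ⟨(b - 4 * y ^ 2) / (4 * y), ?_⟩
      set x : ℝ := (b - 4 * y ^ 2) / (4 * y) with hx
      have hx2 : x + 2 * y = (b + 4 * y ^ 2) / (4 * y) := by
        rw [hx]
        field_simp
        ring
      have hx2pos : 0 < x + 2 * y := by
        rw [hx2]; positivity
      have hsq : x ^ 2 + b = (x + 2 * y) ^ 2 := by
        have : 4 * y * x = b - 4 * y ^ 2 := by
          rw [hx]; field_simp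
        nlinarith
      simp only [hf]
      rw [hsq, Real.sqrt_sq hx2pos.le]
      ring
  have := lintegral_image_eq_lintegral_abs_det_fderiv_mul (volume : Measure ℝ)
    MeasurableSet.univ
    (f' := fun x => (1 : ℝ →L[ℝ] ℝ).smulRight (f' x))
    (fun x _ => (hder x).hasFDerivAt.hasFDerivWithinAt) hinj g
  rw [hrange] at this
  rw [this]
  simp only [Measure.restrict_univ, ContinuousLinearMap.smulRight_one_eq_toSpanSingleton, ContinuousLinearMap.det_toSpanSingleton]
  refine lintegral_congr fun x => ?_
  congr 1
  rw [abs_of_neg (hneg x)]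
  simp only [hf']
  ring_nf
theorem stmt14 (m : ℝ) (hm : 0 < m) (h : ℝ → ℝ) (hmeas : Measurable h)
    (hnonneg : ∀ x, 0 ≤ h x)
    (hpos : 0 < ∫⁻ μ in Ioi (0 : ℝ),
      ENNReal.ofReal μ * ∫⁻ t in Ioi (0 : ℝ), ENNReal.ofReal (h (t + μ))) :
    (∫⁻ μ in Ioi (0 : ℝ), ENNReal.ofReal μ *
      ∫⁻ k : ℝ × ℝ × ℝ, ENNReal.ofReal
        (h ((1 / 2) * (Real.sqrt (k.1 ^ 2 + k.2.1 ^ 2 + k.2.2 ^ 2 + m ^ 2) - k.1) + μ) *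
          (1 - k.1 / Real.sqrt (k.1 ^ 2 + k.2.1 ^ 2 + k.2.2 ^ 2 + m ^ 2)))) = ⊤ := by
  set I : ℝ → ℝ≥0∞ := fun μ => ∫⁻ t in Ioi (0 : ℝ), ENNReal.ofReal (h (t + μ)) with hI
  -- measurability of I
  have hI_meas : Measurable I := by
    apply Measurable.lintegral_prod_right (f := fun μ t => ENNReal.ofReal (h (t + μ)))
      (ν := volume.restrict (Ioi 0))
    exact (hmeas.comp (by fun_prop)).ennreal_ofReal
  -- the inner 3D integral is infinite when I μ ≠ 0
  have hinner : ∀ μ : ℝ, I μ ≠ 0 →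
      (∫⁻ k : ℝ × ℝ × ℝ, ENNReal.ofReal
        (h ((1 / 2) * (Real.sqrt (k.1 ^ 2 + k.2.1 ^ 2 + k.2.2 ^ 2 + m ^ 2) - k.1) + μ) *
          (1 - k.1 / Real.sqrt (k.1 ^ 2 + k.2.1 ^ 2 + k.2.2 ^ 2 + m ^ 2)))) = ⊤ := by
    intro μ hIμ
    have hF : Measurable (fun k : ℝ × ℝ × ℝ => ENNReal.ofReal
        (h ((1 / 2) * (Real.sqrt (k.1 ^ 2 + k.2.1 ^ 2 + k.2.2 ^ 2 + m ^ 2) - k.1) + μ) *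
          (1 - k.1 / Real.sqrt (k.1 ^ 2 + k.2.1 ^ 2 + k.2.2 ^ 2 + m ^ 2)))) := by
      apply Measurable.ennreal_ofReal
      apply Measurable.mul
      · exact hmeas.comp (by fun_prop)
      · fun_prop
    rw [Measure.volume_eq_prod, lintegral_prod_symm' _ hF]
    have hx1d : ∀ p : ℝ × ℝ,
        (∫⁻ x : ℝ, ENNReal.ofReal
          (h ((1 / 2) * (Real.sqrt (x ^ 2 + p.1 ^ 2 + p.2 ^ 2 + m ^ 2) - x) + μ) *
            (1 - x / Real.sqrt (x ^ 2 + p.1 ^ 2 + p.2 ^ 2 + m ^ 2)))) = 2 * I μ := by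
      intro p
      set b : ℝ := p.1 ^ 2 + p.2 ^ 2 + m ^ 2 with hb
      have hb0 : 0 < b := by positivity
      have harg : ∀ x : ℝ, x ^ 2 + p.1 ^ 2 + p.2 ^ 2 + m ^ 2 = x ^ 2 + b := fun x => by
        rw [hb]; ring
      simp only [harg]
      have hrw : ∀ x : ℝ, ENNReal.ofReal
          (h ((1 / 2) * (Real.sqrt (x ^ 2 + b) - x) + μ) *
            (1 - x / Real.sqrt (x ^ 2 + b))) =
          2 * (ENNReal.ofReal ((1 / 2) * (1 - x / Real.sqrt (x ^ 2 + b))) *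
            ENNReal.ofReal (h ((1 / 2) * (Real.sqrt (x ^ 2 + b) - x) + μ))) := by
        intro x
        have hsx : 0 < Real.sqrt (x ^ 2 + b) := Real.sqrt_pos.2 (by positivity)
        have hw : 0 ≤ 1 - x / Real.sqrt (x ^ 2 + b) := by
          rw [sub_nonneg]
          exact (div_le_one hsx).2 (sqrt_gt b x hb0).le
        rw [show h ((1 / 2) * (Real.sqrt (x ^ 2 + b) - x) + μ) *
            (1 - x / Real.sqrt (x ^ 2 + b)) =
            2 * (((1 / 2) * (1 - x / Real.sqrt (x ^ 2 + b))) *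
              h ((1 / 2) * (Real.sqrt (x ^ 2 + b) - x) + μ)) from by ring]
        rw [ENNReal.ofReal_mul (by norm_num : (0:ℝ) ≤ 2),
          ENNReal.ofReal_mul (by positivity : (0:ℝ) ≤ (1 / 2) * (1 - x / Real.sqrt (x ^ 2 + b)))]
        norm_num
      simp only [hrw]
      rw [lintegral_const_mul' 2 _ (by norm_num)]
      congr 1
      exact (key_cov b hb0 (fun y => ENNReal.ofReal (h (y + μ)))).symm
    simp only [hx1d]
    rw [lintegral_const]
    have hvol : (volume : Measure (ℝ × ℝ)) univ = ⊤ := by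
      rw [← univ_prod_univ, Measure.volume_eq_prod, Measure.prod_prod, Real.volume_univ]
      simp
    rw [hvol, ENNReal.mul_top]
    intro hc
    rw [mul_eq_zero] at hc
    rcases hc with hc | hc
    · norm_num at hc
    · exact hIμ hc
  -- the good set S
  set S : Set ℝ := Ioi 0 ∩ {μ | I μ ≠ 0} with hS
  have hS_meas : MeasurableSet S :=
    measurableSet_Ioi.inter (hI_meas (measurableSet_singleton 0).compl)
  have hS_sub : S ⊆ Ioi 0 := inter_subset_left
  have hS_pos : volume S ≠ 0 := by
    intro hS0
    have hae : ∀ᵐ μ : ℝ, μ ∈ Ioi (0 : ℝ) → ENNReal.ofReal μ * I μ = 0 := by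
      refine measure_mono_null ?_ hS0
      intro μ hμ
      simp only [mem_compl_iff, mem_setOf_eq, not_forall] at hμ
      obtain ⟨h1, h2⟩ := hμ
      refine ⟨h1, fun hI0 => h2 ?_⟩
      rw [hI0, mul_zero]
    have : (∫⁻ μ in Ioi (0 : ℝ), ENNReal.ofReal μ * I μ) = 0 := by
      rw [← lintegral_zero (μ := volume.restrict (Ioi (0:ℝ)))]
      exact lintegral_congr_ae ((ae_restrict_iff' measurableSet_Ioi).2 hae)
    rw [this] at hpos
    exact lt_irrefl _ hpos
  -- conclude
  rw [eq_top_iff]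
  calc (⊤ : ℝ≥0∞) = ⊤ * volume S := (ENNReal.top_mul hS_pos).symm
    _ = ∫⁻ _ in S, ⊤ := (setLIntegral_const S ⊤).symm
    _ = ∫⁻ μ in S, ENNReal.ofReal μ *
      ∫⁻ k : ℝ × ℝ × ℝ, ENNReal.ofReal
        (h ((1 / 2) * (Real.sqrt (k.1 ^ 2 + k.2.1 ^ 2 + k.2.2 ^ 2 + m ^ 2) - k.1) + μ) *
          (1 - k.1 / Real.sqrt (k.1 ^ 2 + k.2.1 ^ 2 + k.2.2 ^ 2 + m ^ 2))) := by
        apply setLIntegral_congr_fun hS_meas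
        intro μ hμ
        dsimp only
        rw [hinner μ hμ.2, ENNReal.mul_top]
        simp only [ne_eq, ENNReal.ofReal_eq_zero, not_le]
        exact hμ.1
    _ ≤ _ := lintegral_mono_set hS_sub
end

section
/- For m ≥ 0 define B(m) = ∫_0^∞ ∫_{m²/u}^∞ P_m(u,v) e^{−u² − v²} dv du, where P_m(u,v) = v u³/6 − m² u²/2 + m⁴ u/(2v) − m⁶/(6 v²). Then B(m) ≥ 0 for every m ≥ 0, and B(m) → 0 as m → ∞. (This is the mass-dependence of the Gaussian-smeared DSNEC bound: the lower bound −B(m)/(4π⁴) tends to zero for large mass.) -/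
open MeasureTheory Set Filter

lemma P_bounds {m u v : ℝ} (hu : 0 < u) (hv : m ^ 2 / u ≤ v) :
    0 ≤ (v * u ^ 3 / 6 - m ^ 2 * u ^ 2 / 2 + m ^ 4 * u / (2 * v) - m ^ 6 / (6 * v ^ 2)) ∧
    (v * u ^ 3 / 6 - m ^ 2 * u ^ 2 / 2 + m ^ 4 * u / (2 * v) - m ^ 6 / (6 * v ^ 2))
      ≤ u ^ 3 * v / 6 := by
  have huv : m ^ 2 ≤ v * u := (div_le_iff₀ hu).mp hv
  have hv0 : 0 ≤ v := le_trans (div_nonneg (sq_nonneg m) hu.le) hv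
  rcases hv0.eq_or_lt with h0 | hvpos
  · have hm2 : m ^ 2 = 0 := le_antisymm (by nlinarith) (sq_nonneg m)
    have hm4 : m ^ 4 = 0 := by nlinarith [sq_nonneg m]
    have hm6 : m ^ 6 = 0 := by nlinarith [sq_nonneg m]
    constructor <;> simp [← h0, hm2, hm4, hm6]
  · have key : (v * u ^ 3 / 6 - m ^ 2 * u ^ 2 / 2 + m ^ 4 * u / (2 * v) - m ^ 6 / (6 * v ^ 2))
        = (u * v - m ^ 2) ^ 3 / (6 * v ^ 2) := by
      field_simp
      ring
    have hsub : 0 ≤ u * v - m ^ 2 := by nlinarith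
    constructor
    · rw [key]
      exact div_nonneg (pow_nonneg hsub 3) (by positivity)
    · rw [key, div_le_iff₀ (by positivity)]
      have h1 : (u * v - m ^ 2) ^ 3 ≤ (u * v) ^ 3 :=
        pow_le_pow_left₀ hsub (by nlinarith [sq_nonneg m]) 3
      nlinarith [h1]

lemma inner_bound (m : ℝ) {u : ℝ} (hu : 0 < u) :
    (∫ v in Ici (m ^ 2 / u),
      (v * u ^ 3 / 6 - m ^ 2 * u ^ 2 / 2 + m ^ 4 * u / (2 * v) - m ^ 6 / (6 * v ^ 2)) *
        Real.exp (-u ^ 2 - v ^ 2))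
      ≤ (u ^ 3 / 6 * Real.exp (-m ^ 2 - u ^ 2 / 2)) *
          ∫ v in Ici (0 : ℝ), v * Real.exp (-(1/2) * v ^ 2) := by
  set a := m ^ 2 / u with ha
  set c := u ^ 3 / 6 * Real.exp (-m ^ 2 - u ^ 2 / 2) with hc
  have hc0 : 0 ≤ c := by positivity
  set g : ℝ → ℝ := fun v => c * (v * Real.exp (-(1/2) * v ^ 2)) with hg
  have hgint : Integrable (fun v : ℝ => v * Real.exp (-(1/2) * v ^ 2)) :=
    integrable_mul_exp_neg_mul_sq (by norm_num)
  have hgint' : Integrable g := hgint.const_mul c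
  have ha0 : 0 ≤ a := div_nonneg (sq_nonneg m) hu.le
  have step1 : (∫ v in Ici a,
      (v * u ^ 3 / 6 - m ^ 2 * u ^ 2 / 2 + m ^ 4 * u / (2 * v) - m ^ 6 / (6 * v ^ 2)) *
        Real.exp (-u ^ 2 - v ^ 2)) ≤ ∫ v in Ici a, g v := by
    apply integral_mono_of_nonneg
    · refine ae_restrict_of_forall_mem measurableSet_Ici fun v hv => ?_
      exact mul_nonneg (P_bounds hu hv).1 (Real.exp_pos _).le
    · exact hgint'.integrableOn
    · refine ae_restrict_of_forall_mem measurableSet_Ici fun v hv => ?_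
      have hv0 : 0 ≤ v := le_trans ha0 hv
      have huv : m ^ 2 ≤ v * u := (div_le_iff₀ hu).mp hv
      have hexp : Real.exp (-u ^ 2 - v ^ 2) ≤
          Real.exp (-m ^ 2 - u ^ 2 / 2 + -(1/2) * v ^ 2) := by
        apply Real.exp_le_exp.2
        nlinarith [sq_nonneg (u - v)]
      calc (v * u ^ 3 / 6 - m ^ 2 * u ^ 2 / 2 + m ^ 4 * u / (2 * v) - m ^ 6 / (6 * v ^ 2)) *
            Real.exp (-u ^ 2 - v ^ 2)
          ≤ (u ^ 3 * v / 6) * Real.exp (-m ^ 2 - u ^ 2 / 2 + -(1/2) * v ^ 2) :=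
            mul_le_mul (P_bounds hu hv).2 hexp (Real.exp_pos _).le (by positivity)
        _ = g v := by rw [Real.exp_add]; simp only [hg]; ring
  have step2 : (∫ v in Ici a, g v) ≤ ∫ v in Ici (0 : ℝ), g v := by
    apply setIntegral_mono_set hgint'.integrableOn
    · refine ae_restrict_of_forall_mem measurableSet_Ici fun v hv => ?_
      exact mul_nonneg hc0 (mul_nonneg hv (Real.exp_pos _).le)
    · exact (Ici_subset_Ici.mpr ha0).eventuallyLE
  calc _ ≤ ∫ v in Ici (0:ℝ), g v := le_trans step1 step2
    _ = c * ∫ v in Ici (0:ℝ), v * Real.exp (-(1/2) * v ^ 2) := integral_const_mul c _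

/-- The Gaussian-smeared DSNEC bound integral
`B(m) = ∫_0^∞ ∫_{m²/u}^∞ P_m(u,v) e^{-u²-v²} dv du`. -/
noncomputable def Bbound (m : ℝ) : ℝ :=
  ∫ u in Ioi (0 : ℝ), ∫ v in Ici (m ^ 2 / u),
    (v * u ^ 3 / 6 - m ^ 2 * u ^ 2 / 2 + m ^ 4 * u / (2 * v) - m ^ 6 / (6 * v ^ 2)) *
      Real.exp (-u ^ 2 - v ^ 2)

lemma Bbound_nonneg (m : ℝ) : 0 ≤ Bbound m := by
  apply setIntegral_nonneg measurableSet_Ioi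
  intro u hu
  apply setIntegral_nonneg measurableSet_Ici
  intro v hv
  exact mul_nonneg (P_bounds hu hv).1 (Real.exp_pos _).le

lemma Bbound_le (m : ℝ) :
    Bbound m ≤ Real.exp (-m ^ 2) *
      ((∫ v in Ici (0:ℝ), v * Real.exp (-(1/2) * v ^ 2)) *
        ∫ u in Ioi (0:ℝ), u ^ 3 / 6 * Real.exp (-(1/2) * u ^ 2)) := by
  set Iv := ∫ v in Ici (0:ℝ), v * Real.exp (-(1/2) * v ^ 2) with hIv
  have hIv0 : 0 ≤ Iv :=
    setIntegral_nonneg measurableSet_Ici fun v hv =>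
      mul_nonneg hv (Real.exp_pos _).le
  set F : ℝ → ℝ := fun u => (Real.exp (-m ^ 2) * Iv) * (u ^ 3 / 6 * Real.exp (-(1/2) * u ^ 2))
    with hF
  have hcube : IntegrableOn (fun u : ℝ => u ^ 3 * Real.exp (-(1/2) * u ^ 2)) (Ioi 0) := by
    have h := integrableOn_rpow_mul_exp_neg_mul_sq (b := 1/2) (by norm_num) (s := 3)
      (by norm_num)
    apply h.congr_fun _ measurableSet_Ioi
    intro x hx
    have h3 : (3:ℝ) = ((3:ℕ):ℝ) := by norm_num
    simp only [h3, Real.rpow_natCast]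
  have hFint : IntegrableOn F (Ioi (0:ℝ)) := by
    have : IntegrableOn (fun u : ℝ => u ^ 3 / 6 * Real.exp (-(1/2) * u ^ 2)) (Ioi 0) := by
      refine IntegrableOn.congr_fun (hcube.const_mul (1/6 : ℝ)) (fun x _ => by ring)
        measurableSet_Ioi
    exact this.const_mul _
  have step : Bbound m ≤ ∫ u in Ioi (0:ℝ), F u := by
    apply integral_mono_of_nonneg
    · refine ae_restrict_of_forall_mem measurableSet_Ioi fun u hu => ?_
      exact setIntegral_nonneg measurableSet_Ici fun v hv =>
        mul_nonneg (P_bounds hu hv).1 (Real.exp_pos _).le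
    · exact hFint
    · refine ae_restrict_of_forall_mem measurableSet_Ioi fun u hu => ?_
      refine le_trans (inner_bound m hu) (le_of_eq ?_)
      simp only [hF]
      rw [show -m ^ 2 - u ^ 2 / 2 = -m ^ 2 + -(1/2) * u ^ 2 by ring, Real.exp_add]
      ring
  calc Bbound m ≤ ∫ u in Ioi (0:ℝ), F u := step
    _ = (Real.exp (-m ^ 2) * Iv) *
          ∫ u in Ioi (0:ℝ), u ^ 3 / 6 * Real.exp (-(1/2) * u ^ 2) := integral_const_mul _ _
    _ = _ := by ring

theorem stmt16 :
    (∀ m : ℝ, 0 ≤ m → 0 ≤ Bbound m) ∧ Tendsto Bbound atTop (nhds 0) := by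
  refine ⟨fun m _ => Bbound_nonneg m, ?_⟩
  set K := (∫ v in Ici (0:ℝ), v * Real.exp (-(1/2) * v ^ 2)) *
      ∫ u in Ioi (0:ℝ), u ^ 3 / 6 * Real.exp (-(1/2) * u ^ 2) with hK
  have hexp : Tendsto (fun m : ℝ => Real.exp (-m ^ 2) * K) atTop (nhds 0) := by
    have h1 : Tendsto (fun m : ℝ => -m ^ 2) atTop atBot := by
      exact tendsto_neg_atTop_atBot.comp (tendsto_pow_atTop two_ne_zero)
    have h2 : Tendsto (fun m : ℝ => Real.exp (-m ^ 2)) atTop (nhds 0) :=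
      Real.tendsto_exp_atBot.comp h1
    simpa using h2.mul_const K
  exact squeeze_zero (fun m => Bbound_nonneg m) (fun m => Bbound_le m) hexp
end
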